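/- arXiv:quant-ph/0404047 — 3 statements merged into one kernel-verified Lean document; each statement's English description precedes it below -/
import Mathlib

section
/- Let x ∈ R^m and y ∈ R^n have positive entries. Then l_u(x ⊗ y) ≥ min(l_u(x), l_u(y)), where the minimal local uniformity l_u(v) of a vector v with positive entries, whose entries sorted in non-increasing order are v_1 ≥ v_2 ≥ ... ≥ v_k, is defined as min{v_{i+1}/v_i : 1 ≤ i < k} (and defined to be 1 if k = 1). -/
open Finset

/-- `eSum v m` is the sum of the `m` largest entries of `v`
(the supremum of sums over subsets of cardinality `m`). -/
noncomputable def eSum {ι : Type} [Fintype ι] (v : ι → ℝ) (m : ℕ) : ℝ :=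
  sSup {x | ∃ s : Finset ι, s.card = m ∧ x = ∑ i ∈ s, v i}

/-- Majorization `x ≺ y`: partial sums of largest entries of `x` are dominated
by those of `y`, with equal total sums. -/
def Maj {ι κ : Type} [Fintype ι] [Fintype κ] (x : ι → ℝ) (y : κ → ℝ) : Prop :=
  (∀ m : ℕ, 1 ≤ m → m < Fintype.card ι → eSum x m ≤ eSum y m) ∧
    ∑ i, x i = ∑ j, y j

/-- Strict majorization `x ◁ y`: all inequalities strict, total sums equal. -/
def SMaj {ι κ : Type} [Fintype ι] [Fintype κ] (x : ι → ℝ) (y : κ → ℝ) : Prop :=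
  (∀ m : ℕ, 1 ≤ m → m < Fintype.card ι → eSum x m < eSum y m) ∧
    ∑ i, x i = ∑ j, y j

/-- Global uniformity: smallest entry divided by largest entry. -/
noncomputable def gu {ι : Type} [Fintype ι] (v : ι → ℝ) : ℝ :=
  sInf (Set.range v) / sSup (Set.range v)

/-- The set of ratios `v b / v a` over consecutive distinct values `v b < v a`
(no value strictly in between). -/
def ratioSet {ι : Type} [Fintype ι] (v : ι → ℝ) : Set ℝ :=
  {r | ∃ a b : ι, v b < v a ∧ (¬ ∃ c : ι, v b < v c ∧ v c < v a) ∧ r = v b / v a}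

open Classical in
noncomputable def lu {ι : Type} [Fintype ι] (v : ι → ℝ) : ℝ :=
  if (∃ a b : ι, v a ≠ v b) then sInf (ratioSet v) else 1

open Classical in
/-- Maximal local uniformity: maximum ratio of consecutive distinct values;
`1` for a constant vector. -/
noncomputable def Lu {ι : Type} [Fintype ι] (v : ι → ℝ) : ℝ :=
  if (∃ a b : ι, v a ≠ v b) then sSup (ratioSet v) else 1

/-- Tensor (Kronecker) product of two vectors. -/
def tens {ι κ : Type} (x : ι → ℝ) (y : κ → ℝ) : ι × κ → ℝ :=
  fun p => x p.1 * y p.2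

/-- `k`-fold tensor power of a vector. -/
def tpow {n : ℕ} (v : Fin n → ℝ) (k : ℕ) : (Fin k → Fin n) → ℝ :=
  fun f => ∏ i, v (f i)

/-- A probability vector: nonnegative entries summing to one. -/
def IsProb {ι : Type} [Fintype ι] (v : ι → ℝ) : Prop :=
  (∀ i, 0 ≤ v i) ∧ ∑ i, v i = 1

/-- `v` sorted in non-increasing order. -/
noncomputable def sortDesc {n : ℕ} (v : Fin n → ℝ) : Fin n → ℝ :=
  fun i => v (Tuple.sort v i.rev)

/-- Shannon entropy (base 2), with the convention `0 log 0 = 0`. -/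
noncomputable def entH {ι : Type} [Fintype ι] (v : ι → ℝ) : ℝ :=
  -∑ i, v i * Real.logb 2 (v i)


/-- next value strictly above `v p`, given some value above exists. -/
lemma next_above {ι : Type} [Fintype ι] (v : ι → ℝ) (p a : ι) (h : v p < v a) :
    ∃ c, v p < v c ∧ ∀ d, v p < v d → v c ≤ v d := by
  obtain ⟨c, hc, hmin⟩ := Finset.exists_min_image
    (Finset.univ.filter fun c => v p < v c) v ⟨a, by simp [h]⟩
  exact ⟨c, by simpa using hc, fun d hd => hmin d (by simp [hd])⟩

lemma ratioSet_bddBelow {ι : Type} [Fintype ι] (v : ι → ℝ) (hv : ∀ i, 0 < v i) :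
    BddBelow (ratioSet v) := by
  refine ⟨0, fun r hr => ?_⟩
  obtain ⟨a, b, hab, _, rfl⟩ := hr
  exact le_of_lt (div_pos (hv b) (hv a))

lemma lu_eq_sInf {ι : Type} [Fintype ι] (v : ι → ℝ) (h : ∃ a b : ι, v a ≠ v b) :
    lu v = sInf (ratioSet v) := by
  classical
  simp only [lu]
  rw [if_pos h]

lemma lu_eq_one {ι : Type} [Fintype ι] (v : ι → ℝ) (h : ∀ a b : ι, v a = v b) :
    lu v = 1 := by
  classical
  simp only [lu]
  rw [if_neg (by push_neg; exact h)]

lemma lu_le_mem {ι : Type} [Fintype ι] (v : ι → ℝ) (hv : ∀ i, 0 < v i)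
    {r : ℝ} (hr : r ∈ ratioSet v) : lu v ≤ r := by
  obtain ⟨a, b, hab, -, -⟩ := id hr
  rw [lu_eq_sInf v ⟨a, b, ne_of_gt hab⟩]
  exact csInf_le (ratioSet_bddBelow v hv) hr

/-- `l_u(x ⊗ y) ≥ min (l_u x) (l_u y)` for positive vectors. -/
theorem minimal_local_uniformity_tensor {m n : ℕ} (hm : 0 < m) (hn : 0 < n)
    (x : Fin m → ℝ) (y : Fin n → ℝ)
    (hx : ∀ i, 0 < x i) (hy : ∀ j, 0 < y j) :
    min (lu x) (lu y) ≤ lu (tens x y) := by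
  classical
  by_cases hc : ∃ p q : Fin m × Fin n, tens x y p ≠ tens x y q
  · rw [lu_eq_sInf _ hc]
    apply le_csInf
    · -- ratioSet (tens x y) is nonempty
      obtain ⟨p, q, hpq⟩ := hc
      rcases hpq.lt_or_gt with h | h
      · obtain ⟨c, hc1, hc2⟩ := next_above (tens x y) p q h
        exact ⟨tens x y p / tens x y c, c, p, hc1,
          fun ⟨d, hd1, hd2⟩ => absurd (hc2 d hd1) (not_le.mpr hd2), rfl⟩
      · obtain ⟨c, hc1, hc2⟩ := next_above (tens x y) q p h
        exact ⟨tens x y q / tens x y c, c, q, hc1,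
          fun ⟨d, hd1, hd2⟩ => absurd (hc2 d hd1) (not_le.mpr hd2), rfl⟩
    · rintro r ⟨a, b, hab, hmid, rfl⟩
      -- tens x y b < tens x y a, nothing in between
      have hU : (0:ℝ) < x a.1 * y a.2 := mul_pos (hx _) (hy _)
      have hu : (0:ℝ) < x b.1 * y b.2 := mul_pos (hx _) (hy _)
      by_cases hx1 : x b.1 < x a.1
      · -- use the x-coordinate
        obtain ⟨c, hc1, hc2⟩ := next_above x b.1 a.1 hx1
        have hmem : x b.1 / x c ∈ ratioSet x :=
          ⟨c, b.1, hc1, fun ⟨d, hd1, hd2⟩ => absurd (hc2 d hd1) (not_le.mpr hd2), rfl⟩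
        have h1 : lu x ≤ x b.1 / x c := lu_le_mem x hx hmem
        have hge : x a.1 * y a.2 ≤ x c * y b.2 := by
          by_contra hlt
          push_neg at hlt
          exact hmid ⟨(c, b.2), by
            constructor
            · exact mul_lt_mul_of_pos_right hc1 (hy _)
            · exact hlt⟩
        have h2 : x b.1 / x c ≤ tens x y b / tens x y a := by
          have : x b.1 / x c = (x b.1 * y b.2) / (x c * y b.2) := by
            rw [mul_div_mul_right _ _ (ne_of_gt (hy b.2))]
          rw [this]
          exact div_le_div_of_nonneg_left hu.le hU hge
        exact le_trans (min_le_left _ _) (le_trans h1 h2)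
      · -- then y b.2 < y a.2
        push_neg at hx1
        have hy1 : y b.2 < y a.2 := by
          by_contra hle
          push_neg at hle
          exact absurd (mul_le_mul hx1 hle (hy _).le (hx _).le) (not_le.mpr hab)
        obtain ⟨c, hc1, hc2⟩ := next_above y b.2 a.2 hy1
        have hmem : y b.2 / y c ∈ ratioSet y :=
          ⟨c, b.2, hc1, fun ⟨d, hd1, hd2⟩ => absurd (hc2 d hd1) (not_le.mpr hd2), rfl⟩
        have h1 : lu y ≤ y b.2 / y c := lu_le_mem y hy hmem
        have hge : x a.1 * y a.2 ≤ x b.1 * y c := by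
          by_contra hlt
          push_neg at hlt
          exact hmid ⟨(b.1, c), by
            constructor
            · exact mul_lt_mul_of_pos_left hc1 (hx _)
            · exact hlt⟩
        have h2 : y b.2 / y c ≤ tens x y b / tens x y a := by
          have : y b.2 / y c = (x b.1 * y b.2) / (x b.1 * y c) := by
            rw [mul_div_mul_left _ _ (ne_of_gt (hx b.1))]
          rw [this]
          exact div_le_div_of_nonneg_left hu.le hU hge
        exact le_trans (min_le_right _ _) (le_trans h1 h2)
  · -- tens constant ⇒ x and y constant
    push_neg at hc
    have j0 : Fin n := ⟨0, hn⟩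
    have i0 : Fin m := ⟨0, hm⟩
    have hxc : ∀ a b : Fin m, x a = x b := fun a b =>
      mul_right_cancel₀ (ne_of_gt (hy j0)) (hc (a, j0) (b, j0))
    have hyc : ∀ a b : Fin n, y a = y b := fun a b =>
      mul_left_cancel₀ (ne_of_gt (hx i0)) (hc (i0, a) (i0, b))
    rw [lu_eq_one _ hc, lu_eq_one _ hxc, lu_eq_one _ hyc]
    simp
end

section
/- Let φ ∈ R^n and χ ∈ R^k be probability vectors with positive entries, where χ is not constant (it has at least two distinct values). If l_u(χ) > g_u(φ), then for every ψ ∈ R^n that is strictly majorized by φ, the tensor product ψ ⊗ χ is strictly majorized by φ ⊗ χ. -/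
open Finset

/-!
An optimal set of `m` entries of `ψ ⊗ χ` splits into fibres over the entries of `χ`, so
`e_m(ψ ⊗ χ) ≤ ∑ⱼ χⱼ e_{mⱼ}(ψ)` with `∑ mⱼ = m`, while every such combination with `φ` in place of
`ψ` is at most `e_m(φ ⊗ χ)`. If some `0 < mⱼ < n`, strict majorization `ψ ◁ φ` makes the
comparison strict. Otherwise every fibre is empty or full, and the combination equals
`∑_{j ∈ T} χⱼ` for a proper nonempty `T`. Exchanging the smallest entry of `φ` in the full fibre
of least weight `χ_a` for the largest entry of `φ` in the empty fibre of greatest weight `χ_b`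
then strictly increases it, because `χ_a φ_min < χ_b φ_max`: either `χ_a ≤ χ_b` (and
`φ_min < φ_max` as `g_u(φ) < l_u(χ) ≤ 1`), or `χ_b / χ_a` is a ratio of consecutive values of `χ`,
hence at least `l_u(χ) > g_u(φ) = φ_min / φ_max`.
-/

section eSum

variable {ι : Type} [Fintype ι]

lemma finite_sums_of_card (v : ι → ℝ) (m : ℕ) :
    {x | ∃ s : Finset ι, s.card = m ∧ x = ∑ i ∈ s, v i}.Finite :=
  (Set.finite_range fun s : Finset ι => ∑ i ∈ s, v i).subset
    (by rintro x ⟨s, -, rfl⟩; exact ⟨s, rfl⟩)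

lemma sum_le_eSum (v : ι → ℝ) (s : Finset ι) : ∑ i ∈ s, v i ≤ eSum v s.card :=
  le_csSup (finite_sums_of_card v s.card).bddAbove ⟨s, rfl, rfl⟩

lemma exists_card_eq_sum_eq_eSum (v : ι → ℝ) {m : ℕ} (hm : m ≤ Fintype.card ι) :
    ∃ s : Finset ι, s.card = m ∧ ∑ i ∈ s, v i = eSum v m := by
  obtain ⟨s, -, hs⟩ := exists_subset_card_eq (s := (univ : Finset ι)) (by simpa using hm)
  have hne : {x | ∃ s : Finset ι, s.card = m ∧ x = ∑ i ∈ s, v i}.Nonempty := ⟨_, s, hs, rfl⟩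
  obtain ⟨t, ht, he⟩ := hne.csSup_mem (finite_sums_of_card v m)
  exact ⟨t, ht, he.symm⟩

lemma eSum_zero (v : ι → ℝ) : eSum v 0 = 0 := by
  simp [eSum]

lemma eSum_card (v : ι → ℝ) : eSum v (Fintype.card ι) = ∑ i, v i := by
  simp [eSum, card_eq_iff_eq_univ]

lemma SMaj.eSum_le {x y : ι → ℝ} (h : SMaj x y) {m : ℕ} (hm : m ≤ Fintype.card ι) :
    eSum x m ≤ eSum y m := by
  rcases Nat.eq_zero_or_pos m with rfl | hm0
  · rw [eSum_zero, eSum_zero]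
  rcases hm.lt_or_eq with hlt | rfl
  · exact (h.1 m hm0 hlt).le
  · rw [eSum_card, eSum_card, h.2]

end eSum

section uniformity

variable {ι κ : Type} [Fintype ι] [Fintype κ]

lemma ratioSet_finite (y : κ → ℝ) : (ratioSet y).Finite :=
  (Set.finite_range fun p : κ × κ => y p.2 / y p.1).subset
    (by rintro r ⟨a, b, -, -, rfl⟩; exact ⟨(a, b), rfl⟩)

lemma lu_le_div {y : κ → ℝ} {a b : κ} (hba : y b < y a)
    (hgap : ¬ ∃ c, y b < y c ∧ y c < y a) : lu y ≤ y b / y a := by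
  rw [lu, if_pos ⟨a, b, hba.ne'⟩]
  exact csInf_le (ratioSet_finite y).bddBelow ⟨a, b, hba, hgap, rfl⟩

lemma lu_le_one {y : κ → ℝ} (hy : ∀ j, 0 < y j) : lu y ≤ 1 := by
  by_cases hc : ∃ a b, y a ≠ y b
  · obtain ⟨a, b, hba⟩ : ∃ a b, y b < y a := by
      obtain ⟨p, q, hpq⟩ := hc
      rcases hpq.lt_or_gt with h | h
      exacts [⟨q, p, h⟩, ⟨p, q, h⟩]
    classical
    obtain ⟨a', ha', hmin⟩ := ({c | y b < y c} : Finset κ).exists_min_image y ⟨a, by simpa⟩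
    rw [mem_filter_univ] at ha'
    have hgap : ¬ ∃ c, y b < y c ∧ y c < y a' :=
      fun ⟨c, hbc, hca⟩ => (hmin c (by simpa)).not_gt hca
    exact (lu_le_div ha' hgap).trans ((div_le_one (hy a')).2 ha'.le)
  · rw [lu, if_neg hc]

lemma mul_sInf_lt_mul_sSup_of_gu_lt_lu [Nonempty ι] {x : ι → ℝ} {y : κ → ℝ}
    (hx : ∀ i, 0 < x i) (hy : ∀ j, 0 < y j) (h : gu x < lu y) {a b : κ}
    (hgap : ¬ ∃ c, y b < y c ∧ y c < y a) :
    y a * sInf (Set.range x) < y b * sSup (Set.range x) := by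
  have hsup : 0 < sSup (Set.range x) := (hx (Classical.arbitrary ι)).trans_le
    (le_csSup (Set.finite_range x).bddAbove ⟨_, rfl⟩)
  rcases le_or_gt (y a) (y b) with hab | hba
  · have hlt : sInf (Set.range x) < sSup (Set.range x) := by
      rw [← div_lt_one hsup]
      exact h.trans_le (lu_le_one hy)
    calc y a * sInf (Set.range x) < y a * sSup (Set.range x) := mul_lt_mul_of_pos_left hlt (hy a)
      _ ≤ y b * sSup (Set.range x) := mul_le_mul_of_nonneg_right hab hsup.le
  · have hlt := h.trans_le (lu_le_div hba hgap)
    rw [gu, div_lt_div_iff₀ hsup (hy a)] at hlt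
    linarith

end uniformity

section tensor

variable {ι κ : Type} [Fintype ι] [Fintype κ]

lemma sum_tens (x : ι → ℝ) (y : κ → ℝ) : ∑ p, tens x y p = (∑ i, x i) * ∑ j, y j := by
  rw [Fintype.sum_prod_type, sum_mul_sum]
  rfl

section fibres

variable [DecidableEq ι] [DecidableEq κ]

lemma sum_tens_eq_sum_mul_sum_fibre (x : ι → ℝ) (y : κ → ℝ) (s : Finset (ι × κ)) :
    ∑ p ∈ s, tens x y p = ∑ j, y j * ∑ i with (i, j) ∈ s, x i := by
  rw [sum_finset_product_right s univ (fun j => {i | (i, j) ∈ s}) (by simp)]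
  simp only [tens, mul_sum, mul_comm]

lemma card_eq_sum_card_fibre (s : Finset (ι × κ)) : s.card = ∑ j, #{i | (i, j) ∈ s} := by
  rw [card_eq_sum_ones, sum_finset_product_right s univ (fun j => {i | (i, j) ∈ s}) (by simp)]
  simp

end fibres

lemma exists_eSum_tens_le_sum_mul_eSum (x : ι → ℝ) {y : κ → ℝ} (hy : ∀ j, 0 ≤ y j) {m : ℕ}
    (hm : m ≤ Fintype.card ι * Fintype.card κ) :
    ∃ c : κ → ℕ, (∀ j, c j ≤ Fintype.card ι) ∧ ∑ j, c j = m ∧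
      eSum (tens x y) m ≤ ∑ j, y j * eSum x (c j) := by
  classical
  obtain ⟨s, rfl, hs⟩ := exists_card_eq_sum_eq_eSum (tens x y) (by simpa using hm)
  refine ⟨fun j => #{i | (i, j) ∈ s}, fun j => card_le_univ _, (card_eq_sum_card_fibre s).symm, ?_⟩
  rw [← hs, sum_tens_eq_sum_mul_sum_fibre]
  exact sum_le_sum fun j _ => mul_le_mul_of_nonneg_left (sum_le_eSum x _) (hy j)

lemma sum_mul_eSum_le_eSum_tens (x : ι → ℝ) (y : κ → ℝ) {c : κ → ℕ}
    (hc : ∀ j, c j ≤ Fintype.card ι) :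
    ∑ j, y j * eSum x (c j) ≤ eSum (tens x y) (∑ j, c j) := by
  classical
  choose t htc hts using fun j => exists_card_eq_sum_eq_eSum x (hc j)
  have hfibre : ∀ j, ({i | (i, j) ∈ ({p | p.1 ∈ t p.2} : Finset (ι × κ))} : Finset ι) = t j := by
    intro j; ext i; simp
  have hS := sum_le_eSum (tens x y) {p | p.1 ∈ t p.2}
  simpa [sum_tens_eq_sum_mul_sum_fibre, card_eq_sum_card_fibre, hfibre, htc, hts] using hS

end tensor

section strict

variable {ι κ : Type} [Fintype ι] [Fintype κ]

lemma sum_mul_sum_lt_eSum_tens [Nonempty ι] {x : ι → ℝ} {y : κ → ℝ} (hx : ∀ i, 0 < x i)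
    (hy : ∀ j, 0 < y j) (h : gu x < lu y) {T : Finset κ} (hT : T.Nonempty) (hTu : T ≠ univ) :
    (∑ i, x i) * ∑ j ∈ T, y j < eSum (tens x y) (Fintype.card ι * T.card) := by
  classical
  obtain ⟨a, haT, ha⟩ := T.exists_min_image y hT
  obtain ⟨b, hbT, hb⟩ :=
    Tᶜ.exists_max_image y (nonempty_iff_ne_empty.2 (compl_eq_empty_iff T |>.not.2 hTu))
  rw [mem_compl] at hbT
  have hgap : ¬ ∃ c, y b < y c ∧ y c < y a := by
    rintro ⟨c, hbc, hca⟩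
    by_cases hc : c ∈ T
    · exact (ha c hc).not_gt hca
    · exact (hb c (mem_compl.2 hc)).not_gt hbc
  obtain ⟨i₀, hi₀⟩ := (Set.range_nonempty x).csInf_mem (Set.finite_range x)
  obtain ⟨i₁, hi₁⟩ := (Set.range_nonempty x).csSup_mem (Set.finite_range x)
  have key := mul_sInf_lt_mul_sSup_of_gu_lt_lu hx hy h hgap
  rw [← hi₀, ← hi₁] at key
  set S := insert (i₁, b) ((univ ×ˢ T).erase (i₀, a))
  have hcard : S.card = Fintype.card ι * T.card := by
    have : 0 < Fintype.card ι * T.card := Nat.mul_pos Fintype.card_pos hT.card_pos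
    rw [card_insert_of_notMem (by simp [hbT]), card_erase_of_mem (by simp [haT]), card_product,
      card_univ]
    omega
  have hsum : ∑ p ∈ S, tens x y p = (∑ i, x i) * ∑ j ∈ T, y j - y a * x i₀ + y b * x i₁ := by
    rw [sum_insert (by simp [hbT]), sum_erase_eq_sub (by simp [haT]), sum_product, sum_mul_sum]
    simp only [tens]
    ring
  calc (∑ i, x i) * ∑ j ∈ T, y j < ∑ p ∈ S, tens x y p := by rw [hsum]; linarith
    _ ≤ eSum (tens x y) (Fintype.card ι * T.card) := hcard ▸ sum_le_eSum _ S

lemma sum_mul_eSum_lt_eSum_tens_of_forall_eq_zero_or_eq_card [Nonempty ι] {w x : ι → ℝ}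
    {y : κ → ℝ} (hx : ∀ i, 0 < x i) (hy : ∀ j, 0 < y j) (h : gu x < lu y)
    (hwx : ∑ i, w i = ∑ i, x i) {c : κ → ℕ} (hc : ∀ j, c j = 0 ∨ c j = Fintype.card ι)
    (hpos : 0 < ∑ j, c j) (hlt : ∑ j, c j < Fintype.card ι * Fintype.card κ) :
    ∑ j, y j * eSum w (c j) < eSum (tens x y) (∑ j, c j) := by
  classical
  set T : Finset κ := {j | c j = Fintype.card ι}
  have hval : ∑ j, y j * eSum w (c j) = (∑ i, x i) * ∑ j ∈ T, y j := by
    rw [sum_filter, mul_sum]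
    refine sum_congr rfl fun j _ => ?_
    rcases hc j with h0 | h1
    · simp [h0, eSum_zero, Fintype.card_ne_zero.symm]
    · simp [h1, eSum_card, hwx, mul_comm]
  have hcard : ∑ j, c j = Fintype.card ι * T.card := by
    rw [mul_comm, ← smul_eq_mul, ← sum_const, sum_filter]
    refine sum_congr rfl fun j _ => ?_
    rcases hc j with h0 | h1
    · simp [h0, Fintype.card_ne_zero.symm]
    · simp [h1]
  have hT : T.Nonempty := card_pos.1 (Nat.pos_of_mul_pos_left (a := Fintype.card ι) (hcard ▸ hpos))
  have hTu : T ≠ univ := by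
    rintro hTuniv
    rw [hcard, hTuniv, card_univ] at hlt
    exact lt_irrefl _ hlt
  rw [hval, hcard]
  exact sum_mul_sum_lt_eSum_tens hx hy h hT hTu

lemma sum_mul_eSum_lt_eSum_tens_of_smaj {w x : ι → ℝ} {y : κ → ℝ} (hw : SMaj w x)
    (hy : ∀ j, 0 < y j) {c : κ → ℕ} (hc : ∀ j, c j ≤ Fintype.card ι)
    (hmid : ∃ j, 1 ≤ c j ∧ c j < Fintype.card ι) :
    ∑ j, y j * eSum w (c j) < eSum (tens x y) (∑ j, c j) := by
  obtain ⟨j₀, hj₀, hj₀'⟩ := hmid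
  calc ∑ j, y j * eSum w (c j) < ∑ j, y j * eSum x (c j) :=
        sum_lt_sum (fun j _ => mul_le_mul_of_nonneg_left (hw.eSum_le (hc j)) (hy j).le)
          ⟨j₀, mem_univ _, mul_lt_mul_of_pos_left (hw.1 _ hj₀ hj₀') (hy j₀)⟩
    _ ≤ eSum (tens x y) (∑ j, c j) := sum_mul_eSum_le_eSum_tens x y hc

theorem SMaj.tens {w x : ι → ℝ} {y : κ → ℝ} (hw : SMaj w x) (hx : ∀ i, 0 < x i)
    (hy : ∀ j, 0 < y j) (h : gu x < lu y) : SMaj (tens w y) (tens x y) := by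
  refine ⟨fun m hm hm' => ?_, by rw [sum_tens, sum_tens, hw.2]⟩
  rw [Fintype.card_prod] at hm'
  have : Nonempty ι :=
    Fintype.card_pos_iff.1 (Nat.pos_of_mul_pos_right (b := Fintype.card κ) (by omega))
  obtain ⟨c, hc, rfl, hle⟩ := exists_eSum_tens_le_sum_mul_eSum w (fun j => (hy j).le) hm'.le
  refine hle.trans_lt ?_
  by_cases hmid : ∃ j, 1 ≤ c j ∧ c j < Fintype.card ι
  · exact sum_mul_eSum_lt_eSum_tens_of_smaj hw hy hc hmid
  · push Not at hmid
    have hc' : ∀ j, c j = 0 ∨ c j = Fintype.card ι := fun j =>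
      (Nat.eq_zero_or_pos _).imp_right fun hj => le_antisymm (hc j) (hmid j hj)
    exact sum_mul_eSum_lt_eSum_tens_of_forall_eq_zero_or_eq_card hx hy h hw.2 hc' hm hm'

end strict

theorem strict_majorization_tensor_of_lu_gt_gu_general {n k : ℕ}
    (φ : Fin n → ℝ) (χ : Fin k → ℝ)
    (hφpos : ∀ i, 0 < φ i) (hχpos : ∀ i, 0 < χ i)
    (h : gu φ < lu χ) :
    ∀ ψ : Fin n → ℝ, SMaj ψ φ → SMaj (tens ψ χ) (tens φ χ) :=
  fun _ hψ => hψ.tens hφpos hχpos h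

/-- if `l_u(χ) > g_u(φ)` then strict majorization is preserved by
tensoring with `χ`. -/
theorem strict_majorization_tensor_of_lu_gt_gu {n k : ℕ}
    (φ : Fin n → ℝ) (χ : Fin k → ℝ)
    (hφprob : IsProb φ) (hχprob : IsProb χ)
    (hφpos : ∀ i, 0 < φ i) (hχpos : ∀ i, 0 < χ i)
    (hχnc : ∃ a b : Fin k, χ a ≠ χ b)
    (h : gu φ < lu χ) :
    ∀ ψ : Fin n → ℝ, SMaj ψ φ → SMaj (tens ψ χ) (tens φ χ) :=
  strict_majorization_tensor_of_lu_gt_gu_general φ χ hφpos hχpos h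
end

section
/- Let φ ∈ R^n and χ ∈ R^k be probability vectors with positive entries and n, k ≥ 2. Suppose there exists at least one ψ ∈ R^n strictly majorized by φ. If for every ψ strictly majorized by φ the tensor product ψ ⊗ χ is strictly majorized by φ ⊗ χ, then l_u(χ) > g_u(φ). -/
open Finset

/-!
Suppose `l_u(χ) ≤ g_u(φ)`, witnessed by consecutive values `χ b < χ a` of `χ` with
`χ b / χ a ≤ min φ / max φ`. Then every entry `φ i χ j` with `χ j ≥ χ a` is at least every entry
with `χ j ≤ χ b`, so the block `J = {j | χ a ≤ χ j}` carries the `n · |J|` largest entries of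
`φ ⊗ χ`. The same block of `ψ ⊗ χ` has the same sum `(∑ ψ) (∑_J χ)`, so `ψ ⊗ χ` cannot be
strictly majorized by `φ ⊗ χ` at that index. If `χ` is constant, `g_u(φ) ≥ 1` forces `φ` to be
constant, and nothing is strictly majorized by a constant vector.
-/

lemma sum_le_sum_of_threshold {ι : Type} [DecidableEq ι] {v : ι → ℝ} {A s : Finset ι} {θ : ℝ}
    (hA : ∀ i ∈ A, θ ≤ v i) (hAc : ∀ i ∉ A, v i ≤ θ) (hcard : s.card = A.card) :
    ∑ i ∈ s, v i ≤ ∑ i ∈ A, v i := by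
  have hout : ∑ i ∈ s \ A, v i ≤ (s \ A).card • θ :=
    sum_le_card_nsmul _ _ _ fun i hi => hAc i (mem_sdiff.mp hi).2
  have hin : (A \ s).card • θ ≤ ∑ i ∈ A \ s, v i :=
    card_nsmul_le_sum _ _ _ fun i hi => hA i (mem_sdiff.mp hi).1
  rw [card_sdiff_comm hcard] at hout
  linarith [sum_sdiff_sub_sum_sdiff (s₁ := A) (s₂ := s) (f := v)]

section Majorization

variable {ι : Type} [Fintype ι]

lemma eSum_card_eq_sum_of_threshold {v : ι → ℝ} {A : Finset ι} {θ : ℝ}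
    (hA : ∀ i ∈ A, θ ≤ v i) (hAc : ∀ i ∉ A, v i ≤ θ) :
    eSum v A.card = ∑ i ∈ A, v i := by
  classical
  refine le_antisymm (csSup_le ⟨_, A, rfl, rfl⟩ ?_) (sum_le_eSum v A)
  rintro x ⟨s, hs, rfl⟩
  exact sum_le_sum_of_threshold hA hAc hs

lemma SMaj.sum_lt_of_threshold {x y : ι → ℝ} (h : SMaj x y) {A : Finset ι} {θ : ℝ} {i j : ι}
    (hi : i ∈ A) (hj : j ∉ A) (hA : ∀ i ∈ A, θ ≤ y i) (hAc : ∀ i ∉ A, y i ≤ θ) :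
    ∑ i ∈ A, x i < ∑ i ∈ A, y i := by
  rw [← eSum_card_eq_sum_of_threshold hA hAc]
  exact (sum_le_eSum x A).trans_lt (h.1 _ (card_pos.mpr ⟨i, hi⟩) (card_lt_univ_of_notMem hj))

lemma not_sMaj_of_forall_eq {x y : ι → ℝ} (hy : ∀ i j, y i = y j)
    (hι : 1 < Fintype.card ι) : ¬ SMaj x y := by
  intro h
  have : Nontrivial ι := Fintype.one_lt_card_iff_nontrivial.mp hι
  obtain ⟨j⟩ : Nonempty ι := inferInstance
  obtain ⟨i, -, hi⟩ := exists_le_of_sum_le (f := fun _ => y j) (g := x) univ_nonempty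
    (by rw [h.2]; exact sum_le_sum fun i _ => (hy j i).le)
  obtain ⟨i', hi'⟩ := exists_ne i
  have hlt := h.sum_lt_of_threshold (A := {i}) (θ := y j) (mem_singleton_self i)
    (by simpa using hi') (fun i _ => (hy j i).le) (fun i _ => (hy i j).le)
  rw [sum_singleton, sum_singleton, hy i j] at hlt
  exact hlt.not_ge hi

end Majorization

section Uniformity

variable {ι : Type} [Fintype ι]

lemma exists_gu_eq_div [Nonempty ι] (v : ι → ℝ) :
    ∃ i₀ i₁, (∀ i, v i₀ ≤ v i) ∧ (∀ i, v i ≤ v i₁) ∧ gu v = v i₀ / v i₁ := by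
  have hfin := Set.finite_range v
  obtain ⟨i₁, hi₁⟩ := (Set.range_nonempty v).csSup_mem hfin
  obtain ⟨i₀, hi₀⟩ := (Set.range_nonempty v).csInf_mem hfin
  refine ⟨i₀, i₁, fun i => ?_, fun i => ?_, by rw [gu, hi₀, hi₁]⟩
  · exact hi₀ ▸ csInf_le hfin.bddBelow ⟨i, rfl⟩
  · exact hi₁ ▸ le_csSup hfin.bddAbove ⟨i, rfl⟩

lemma forall_eq_of_one_le_gu [Nonempty ι] {v : ι → ℝ} (hpos : ∀ i, 0 < v i) (h : 1 ≤ gu v) :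
    ∀ i j, v i = v j := by
  obtain ⟨i₀, i₁, hmin, hmax, hgu⟩ := exists_gu_eq_div v
  rw [hgu, one_le_div (hpos i₁)] at h
  have hconst : ∀ i, v i = v i₀ := fun i => le_antisymm ((hmax i).trans h) (hmin i)
  exact fun i j => (hconst i).trans (hconst j).symm

lemma ratioSet_nonempty {v : ι → ℝ} (h : ∃ a b, v a ≠ v b) : (ratioSet v).Nonempty := by
  classical
  obtain ⟨a₀, b, hlt⟩ : ∃ a b, v b < v a := by
    obtain ⟨a, b, hab⟩ := h
    rcases hab.lt_or_gt with hab | hab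
    exacts [⟨b, a, hab⟩, ⟨a, b, hab⟩]
  -- the value of `v` just above `v b`
  obtain ⟨a, ha, hmin⟩ := exists_min_image {c | v b < v c} v ⟨a₀, by simpa using hlt⟩
  refine ⟨_, a, b, by simpa using ha, ?_, rfl⟩
  rintro ⟨c, hbc, hca⟩
  exact (hmin c (by simpa using hbc)).not_gt hca

lemma lu_mem_ratioSet {v : ι → ℝ} (h : ∃ a b, v a ≠ v b) : lu v ∈ ratioSet v := by
  rw [lu, if_pos h]
  refine (ratioSet_nonempty h).csInf_mem
    ((Set.finite_range fun p : ι × ι => v p.2 / v p.1).subset ?_)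
  rintro r ⟨a, b, -, -, rfl⟩
  exact ⟨(a, b), rfl⟩

end Uniformity

lemma sum_tens_product {ι κ : Type} (x : ι → ℝ) (y : κ → ℝ) (s : Finset ι) (t : Finset κ) :
    ∑ p ∈ s ×ˢ t, tens x y p = (∑ i ∈ s, x i) * ∑ j ∈ t, y j := by
  rw [sum_product, sum_mul_sum]
  rfl

lemma not_sMaj_tens_of_div_le_gu {n k : ℕ} [NeZero n] {φ ψ : Fin n → ℝ} {χ : Fin k → ℝ}
    (hφpos : ∀ i, 0 < φ i) (hχpos : ∀ j, 0 < χ j) (hsum : ∑ i, ψ i = ∑ i, φ i) {a b : Fin k}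
    (hba : χ b < χ a) (hconsec : ¬ ∃ c, χ b < χ c ∧ χ c < χ a) (hratio : χ b / χ a ≤ gu φ) :
    ¬ SMaj (tens ψ χ) (tens φ χ) := by
  intro h
  obtain ⟨i₀, i₁, hmin, hmax, hgu⟩ := exists_gu_eq_div φ
  rw [hgu, div_le_div_iff₀ (hχpos a) (hφpos i₁)] at hratio
  set J : Finset (Fin k) := {j | χ a ≤ χ j}
  have hmemJ : ∀ j, j ∈ J ↔ χ a ≤ χ j := by simp [J]
  have hupper : ∀ p ∈ univ ×ˢ J, φ i₀ * χ a ≤ tens φ χ p := fun p hp =>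
    mul_le_mul (hmin p.1) ((hmemJ _).mp (mem_product.mp hp).2) (hχpos a).le (hφpos p.1).le
  have hlower : ∀ p ∉ univ ×ˢ J, tens φ χ p ≤ φ i₀ * χ a := by
    intro p hp
    have hpb : χ p.2 ≤ χ b := by
      by_contra hbp
      exact hconsec ⟨p.2, not_le.mp hbp, not_le.mp fun hap => hp (by simp [hmemJ, hap])⟩
    calc tens φ χ p ≤ φ i₁ * χ b := mul_le_mul (hmax p.1) hpb (hχpos p.2).le (hφpos i₁).le
      _ ≤ φ i₀ * χ a := by linarith
  have hlt := h.sum_lt_of_threshold (i := (i₀, a)) (j := (i₀, b))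
    (by simp [hmemJ]) (by simp [hmemJ, hba]) hupper hlower
  rw [sum_tens_product, sum_tens_product, hsum] at hlt
  exact hlt.false

theorem lu_gt_gu_of_strict_majorization_tensor_general {n k : ℕ}
    (hn : 2 ≤ n)
    (φ : Fin n → ℝ) (χ : Fin k → ℝ)
    (hφpos : ∀ i, 0 < φ i) (hχpos : ∀ i, 0 < χ i)
    (hexists : ∃ ψ : Fin n → ℝ, SMaj ψ φ)
    (hall : ∀ ψ : Fin n → ℝ, SMaj ψ φ → SMaj (tens ψ χ) (tens φ χ)) :
    gu φ < lu χ := by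
  have : NeZero n := ⟨by omega⟩
  obtain ⟨ψ, hψ⟩ := hexists
  by_contra! hle
  by_cases hχ : ∃ a b, χ a ≠ χ b
  · obtain ⟨a, b, hba, hconsec, hlu⟩ := lu_mem_ratioSet hχ
    exact not_sMaj_tens_of_div_le_gu hφpos hχpos hψ.2 hba hconsec (hlu ▸ hle) (hall ψ hψ)
  · rw [lu, if_neg hχ] at hle
    exact not_sMaj_of_forall_eq (forall_eq_of_one_le_gu hφpos hle)
      (by rw [Fintype.card_fin]; omega) hψ

/-- converse direction: if tensoring with `χ` preserves strict
majorization into `φ` (and some strictly majorized `ψ` exists), then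
`l_u(χ) > g_u(φ)`. -/
theorem lu_gt_gu_of_strict_majorization_tensor {n k : ℕ}
    (hn : 2 ≤ n) (hk : 2 ≤ k)
    (φ : Fin n → ℝ) (χ : Fin k → ℝ)
    (hφprob : IsProb φ) (hχprob : IsProb χ)
    (hφpos : ∀ i, 0 < φ i) (hχpos : ∀ i, 0 < χ i)
    (hexists : ∃ ψ : Fin n → ℝ, SMaj ψ φ)
    (hall : ∀ ψ : Fin n → ℝ, SMaj ψ φ → SMaj (tens ψ χ) (tens φ χ)) :
    gu φ < lu χ :=
  lu_gt_gu_of_strict_majorization_tensor_general hn φ χ hφpos hχpos hexists hall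
end
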